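/- arXiv:1607.03212 — 2 statements merged into one kernel-verified Lean document; each statement's English description precedes it below -/
import Mathlib

section
/- Let & be a continuous t-norm on [0,1] with residuation →. For every a ∈ (0,1] and every ε > 0 there exists δ > 0 such that ((a+δ) → (a−δ)) & (c−δ) ≥ c − ε for all c ∈ [0,a]. -/
noncomputable def tres (f : ℝ → ℝ → ℝ) (x y : ℝ) : ℝ :=
  sSup {z | z ∈ Set.Icc (0:ℝ) 1 ∧ f x z ≤ y}

def IsContTNorm (f : ℝ → ℝ → ℝ) : Prop :=
  (∀ a ∈ Set.Icc (0:ℝ) 1, ∀ b ∈ Set.Icc (0:ℝ) 1, f a b ∈ Set.Icc (0:ℝ) 1) ∧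
  ContinuousOn (fun p : ℝ × ℝ => f p.1 p.2) (Set.Icc 0 1 ×ˢ Set.Icc 0 1) ∧
  (∀ a ∈ Set.Icc (0:ℝ) 1, ∀ b ∈ Set.Icc (0:ℝ) 1, f a b = f b a) ∧
  (∀ a ∈ Set.Icc (0:ℝ) 1, ∀ b ∈ Set.Icc (0:ℝ) 1, ∀ c ∈ Set.Icc (0:ℝ) 1,
    f (f a b) c = f a (f b c)) ∧
  (∀ a ∈ Set.Icc (0:ℝ) 1, ∀ b ∈ Set.Icc (0:ℝ) 1, ∀ c ∈ Set.Icc (0:ℝ) 1,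
    a ≤ b → f a c ≤ f b c) ∧
  (∀ a ∈ Set.Icc (0:ℝ) 1, f a 1 = a)

open Set

namespace IsContTNorm

variable {f : ℝ → ℝ → ℝ}

lemma continuousOn_comp (ht : IsContTNorm f) {X : Type*} [TopologicalSpace X] {g h : X → ℝ}
    {s : Set X} (hg : ContinuousOn g s) (hh : ContinuousOn h s) (hgs : MapsTo g s (Icc 0 1))
    (hhs : MapsTo h s (Icc 0 1)) : ContinuousOn (fun x => f (g x) (h x)) s :=
  ht.2.1.comp (hg.prodMk hh) fun _ hx => ⟨hgs hx, hhs hx⟩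

lemma mono_right (ht : IsContTNorm f) {x y z : ℝ} (hx : x ∈ Icc (0:ℝ) 1)
    (hy : y ∈ Icc (0:ℝ) 1) (hz : z ∈ Icc (0:ℝ) 1) (hyz : y ≤ z) : f x y ≤ f x z := by
  rw [ht.2.2.1 x hx y hy, ht.2.2.1 x hx z hz]
  exact ht.2.2.2.2.1 y hy z hz x hx hyz

lemma apply_zero (ht : IsContTNorm f) {x : ℝ} (hx : x ∈ Icc (0:ℝ) 1) : f x 0 = 0 := by
  have h0 : (0:ℝ) ∈ Icc (0:ℝ) 1 := ⟨le_rfl, zero_le_one⟩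
  refine le_antisymm ?_ (ht.1 x hx 0 h0).1
  calc f x 0 ≤ f 1 0 := ht.2.2.2.2.1 x hx 1 ⟨zero_le_one, le_rfl⟩ 0 h0 hx.2
    _ = 0 := by rw [ht.2.2.1 1 ⟨zero_le_one, le_rfl⟩ 0 h0, ht.2.2.2.2.2 0 h0]

lemma exists_apply_eq (ht : IsContTNorm f) {x c : ℝ} (hx : x ∈ Icc (0:ℝ) 1)
    (hc : c ∈ Icc 0 x) : ∃ t ∈ Icc (0:ℝ) 1, f x t = c := by
  have hcont : ContinuousOn (fun t => f x t) (Icc 0 1) :=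
    ht.continuousOn_comp continuousOn_const continuousOn_id (fun _ _ => hx) (fun _ h => h)
  refine intermediate_value_Icc zero_le_one hcont ?_
  rwa [ht.apply_zero hx, ht.2.2.2.2.2 x hx]

lemma tres_mem (ht : IsContTNorm f) {x y : ℝ} (hx : x ∈ Icc (0:ℝ) 1) (hy : 0 ≤ y) :
    tres f x y ∈ {z | z ∈ Icc (0:ℝ) 1 ∧ f x z ≤ y} := by
  have hcont : ContinuousOn (fun z => f x z) (Icc 0 1) :=
    ht.continuousOn_comp continuousOn_const continuousOn_id (fun _ _ => hx) (fun _ h => h)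
  have hcompact : IsCompact {z | z ∈ Icc (0:ℝ) 1 ∧ f x z ≤ y} :=
    isCompact_Icc.of_isClosed_subset
      (hcont.preimage_isClosed_of_isClosed isClosed_Icc isClosed_Iic) fun _ hz => hz.1
  refine hcompact.sSup_mem ⟨0, ⟨le_rfl, zero_le_one⟩, ?_⟩
  rwa [ht.apply_zero hx]

lemma apply_tres (ht : IsContTNorm f) {x y : ℝ} (hx : x ∈ Icc (0:ℝ) 1) (hy : y ∈ Icc 0 x) :
    f x (tres f x y) = y := by
  obtain ⟨hmem, hle⟩ := ht.tres_mem hx hy.1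
  obtain ⟨z, hz, rfl⟩ := ht.exists_apply_eq hx hy
  refine le_antisymm hle (ht.mono_right hx hz hmem ?_)
  exact le_csSup (isCompact_Icc.bddAbove.mono fun _ h => h.1) ⟨hz, le_rfl⟩

/-- Every element below `a` has the form `a & t`, so associativity propagates `a & r = a`
down to it. -/
lemma apply_eq_self_of_apply_eq_self (ht : IsContTNorm f) {a r c : ℝ} (ha : a ∈ Icc (0:ℝ) 1)
    (hr : r ∈ Icc (0:ℝ) 1) (har : f a r = a) (hc : c ∈ Icc 0 a) : f r c = c := by
  obtain ⟨t, htI, rfl⟩ := ht.exists_apply_eq ha hc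
  calc f r (f a t) = f (f r a) t := (ht.2.2.2.1 r hr a ha t htI).symm
    _ = f a t := by rw [ht.2.2.1 r hr a ha, har]

/-- The triples `(δ, r, c)` violating the estimate form a compact set, which misses `δ = 0`
by `apply_eq_self_of_apply_eq_self`; hence `δ` is bounded away from `0` on it. -/
lemma exists_pos_forall_sub_lt (ht : IsContTNorm f) {a ε : ℝ} (ha : a ∈ Icc (0:ℝ) 1)
    (hε : 0 < ε) : ∃ δ > (0:ℝ), ∀ r ∈ Icc (0:ℝ) 1, ∀ c ∈ Icc 0 a,
      f (min (a + δ) 1) r = max (a - δ) 0 → c - ε < f r (max (c - δ) 0) := by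
  set K : Set (ℝ × ℝ × ℝ) := Icc 0 1 ×ˢ Icc 0 1 ×ˢ Icc 0 a
  set F := {p ∈ K | f (min (a + p.1) 1) p.2.1 = max (a - p.1) 0}
  set B := {p ∈ F | f p.2.1 (max (p.2.2 - p.1) 0) ≤ p.2.2 - ε}
  have hK : IsClosed K := isClosed_Icc.prod (isClosed_Icc.prod isClosed_Icc)
  have hF : IsClosed F := by
    refine hK.isClosed_eq (ht.continuousOn_comp (by fun_prop) (by fun_prop) ?_ ?_) (by fun_prop)
    · rintro p ⟨hd, -, -⟩
      exact ⟨le_min (by linarith [ha.1, hd.1]) zero_le_one, min_le_right _ _⟩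
    · exact fun p hp => hp.2.1
  have hB : IsCompact B := by
    refine (isCompact_Icc.prod (isCompact_Icc.prod isCompact_Icc)).of_isClosed_subset
      (hF.isClosed_le (ht.continuousOn_comp (by fun_prop) (by fun_prop) ?_ ?_) (by fun_prop))
      fun p hp => hp.1.1
    · exact fun p hp => hp.1.2.1
    · rintro p ⟨⟨hd, -, hc⟩, -⟩
      exact ⟨le_max_right _ _, max_le (by linarith [hd.1, hc.2, ha.2]) zero_le_one⟩
  have h0 : (0:ℝ) ∉ Prod.fst '' B := by
    rintro ⟨⟨d, r, c⟩, ⟨⟨⟨-, hr, hc⟩, hfix⟩, hbad⟩, rfl⟩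
    simp only [add_zero, sub_zero, min_eq_left ha.2, max_eq_left ha.1,
      max_eq_left hc.1] at hfix hbad
    linarith [ht.apply_eq_self_of_apply_eq_self ha hr hfix hc]
  obtain ⟨η, hη, hball⟩ :=
    Metric.isOpen_iff.1 (hB.image continuous_fst).isClosed.isOpen_compl 0 h0
  have hδ : 0 < min (η / 2) 1 := by positivity
  refine ⟨min (η / 2) 1, hδ, fun r hr c hc hfix => ?_⟩
  by_contra! hbad
  refine hball ?_ ⟨(min (η / 2) 1, r, c), ⟨⟨⟨⟨hδ.le, min_le_right _ _⟩, hr, hc⟩, hfix⟩, hbad⟩, rfl⟩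
  rw [mem_ball_zero_iff, Real.norm_of_nonneg hδ.le]
  linarith [min_le_left (η / 2) 1]

end IsContTNorm

/-- for every `a ∈ (0,1]` and `ε > 0` there is `δ > 0` such that
`((a+δ) → (a−δ)) & (c−δ) ≥ c − ε` for all `c ∈ [0,a]` (sums and differences
truncated to stay in `[0,1]`). -/
theorem stmt5 (f : ℝ → ℝ → ℝ) (ht : IsContTNorm f) (a : ℝ) (ha : a ∈ Set.Ioc (0:ℝ) 1) :
    ∀ ε > (0:ℝ), ∃ δ > (0:ℝ), ∀ c ∈ Set.Icc (0:ℝ) a,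
      c - ε ≤ f (tres f (min (a + δ) 1) (max (a - δ) 0)) (max (c - δ) 0) := by
  intro ε hε
  obtain ⟨δ, hδ, hgood⟩ := ht.exists_pos_forall_sub_lt (Ioc_subset_Icc_self ha) hε
  have hx : min (a + δ) 1 ∈ Icc (0:ℝ) 1 :=
    ⟨le_min (by linarith [ha.1]) zero_le_one, min_le_right _ _⟩
  have hy : max (a - δ) 0 ∈ Icc 0 (min (a + δ) 1) :=
    ⟨le_max_right _ _, max_le (le_min (by linarith) (by linarith [ha.2]))
      (le_min (by linarith [ha.1]) zero_le_one)⟩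
  refine ⟨δ, hδ, fun c hc => (hgood _ ?_ c hc (ht.apply_tres hx hy)).le⟩
  exact (ht.tres_mem hx hy.1).1
end

section
/- Let Q = ([0,1],&,1) with & a continuous t-norm and let A be a D(Q)-category. Every weight φ on A generated by a forward Cauchy net in A is flat; consequently every flat complete D(Q)-category is Yoneda complete. -/
/-- A D(Q)-category (ordered fuzzy set) valued in `([0,1], f, 1)`. -/
def IsDCat {α : Type*} (f : ℝ → ℝ → ℝ) (A : α → α → ℝ) : Prop :=
  (∀ x y, A x y ∈ Set.Icc (0:ℝ) 1) ∧
  (∀ x y, A x y ≤ min (A x x) (A y y)) ∧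
  (∀ x y z, f (tres f (A y y) (A y z)) (A x y) ≤ A x z)

/-- A net is forward Cauchy if `lim_{ν ≥ μ} A(x_μ, x_ν)` exists. -/
def FwdCauchy {α : Type*} {Λ : Type*} [Preorder Λ] (A : α → α → ℝ) (x : Λ → α) : Prop :=
  ∃ L : ℝ, Filter.Tendsto (fun q : Λ × Λ => A (x q.1) (x q.2))
    (Filter.atTop ⊓ Filter.principal {q : Λ × Λ | q.1 ≤ q.2}) (nhds L)

/-- A net is biCauchy if `lim_{μ,ν} A(x_μ, x_ν)` exists. -/
def BiCauchy {α : Type*} {Λ : Type*} [Preorder Λ] (A : α → α → ℝ) (x : Λ → α) : Prop :=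
  ∃ L : ℝ, Filter.Tendsto (fun q : Λ × Λ => A (x q.1) (x q.2)) Filter.atTop (nhds L)

/-- The type `⋁_λ ⋀_{μ ≥ λ} A(x_μ, x_μ)` of a net. -/
noncomputable def genType {α : Type*} {Λ : Type*} [Preorder Λ]
    (A : α → α → ℝ) (x : Λ → α) : ℝ :=
  ⨆ l : Λ, ⨅ σ : {σ : Λ // l ≤ σ}, A (x σ.1) (x σ.1)

/-- The weight `⋁_λ ⋀_{μ ≥ λ} A(−, x_μ)` generated by a net. -/
noncomputable def genWeight {α : Type*} {Λ : Type*} [Preorder Λ]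
    (A : α → α → ℝ) (x : Λ → α) : α → ℝ :=
  fun u => ⨆ l : Λ, ⨅ σ : {σ : Λ // l ≤ σ}, A u (x σ.1)

/-- The coweight `⋁_λ ⋀_{μ ≥ λ} A(x_μ, −)` generated by a net. -/
noncomputable def genCoweight {α : Type*} {Λ : Type*} [Preorder Λ]
    (A : α → α → ℝ) (x : Λ → α) : α → ℝ :=
  fun v => ⨆ l : Λ, ⨅ σ : {σ : Λ // l ≤ σ}, A (x σ.1) v

/-- `s` is a Yoneda limit of the net `x`. -/
noncomputable def YonedaLim {α : Type*} {Λ : Type*} [Preorder Λ]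
    (A : α → α → ℝ) (x : Λ → α) (s : α) : Prop :=
  A s s = genType A x ∧ ∀ y, A s y = genCoweight A x y

/-- A weight of type `tφ` on a D(Q)-category. -/
noncomputable def IsWeight {α : Type*} (f : ℝ → ℝ → ℝ) (A : α → α → ℝ)
    (tφ : ℝ) (φ : α → ℝ) : Prop :=
  (∀ u, 0 ≤ φ u ∧ φ u ≤ min tφ (A u u)) ∧
  ∀ u v, f (tres f (A v v) (φ v)) (A u v) ≤ φ u

/-- A coweight of type `b` on a D(Q)-category. -/
noncomputable def IsCoweight {α : Type*} (f : ℝ → ℝ → ℝ) (A : α → α → ℝ)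
    (b : ℝ) (ψ : α → ℝ) : Prop :=
  (∀ u, 0 ≤ ψ u ∧ ψ u ≤ min b (A u u)) ∧
  ∀ u v, f (tres f (A u u) (A u v)) (ψ u) ≤ ψ v

/-- Composition `φ ∘ ψ = ⋁_u (A(u,u) → φ(u)) & ψ(u)` of a weight after a coweight. -/
noncomputable def compWC {α : Type*} (f : ℝ → ℝ → ℝ) (A : α → α → ℝ)
    (φ ψ : α → ℝ) : ℝ :=
  ⨆ u : α, f (tres f (A u u) (φ u)) (ψ u)

/-- A weight `φ` of type `tφ` is flat: `φ ∘ (−)` preserves the top coweight of each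
type and binary meets of coweights of equal type. -/
noncomputable def IsFlat {α : Type*} (f : ℝ → ℝ → ℝ) (A : α → α → ℝ)
    (tφ : ℝ) (φ : α → ℝ) : Prop :=
  ∀ b ∈ Set.Icc (0:ℝ) 1,
    compWC f A φ (fun u => min b (A u u)) = min b tφ ∧
    ∀ ψ₁ ψ₂ : α → ℝ, IsCoweight f A b ψ₁ → IsCoweight f A b ψ₂ →
      compWC f A φ (fun u => min (ψ₁ u) (ψ₂ u)) = min (compWC f A φ ψ₁) (compWC f A φ ψ₂)

/-- `s` is a supremum of the weight `φ` of type `tφ`. -/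
noncomputable def IsSupremum {α : Type*} (f : ℝ → ℝ → ℝ) (A : α → α → ℝ)
    (tφ : ℝ) (φ : α → ℝ) (s : α) : Prop :=
  A s s = tφ ∧ ∀ y, A s y = min (A y y) (⨅ u : α, f (tres f (φ u) (A u y)) tφ)

/-!
Let `{x_λ}` be a forward Cauchy net with `lim_{μ ≤ ν} A(x_μ, x_ν) = L`. A continuous t-norm is
divisible, `a & (a → b) = a ∧ b`, and uniformly continuous; together these make `ψ(x_λ)` almost
increasing for every coweight `ψ` and `ω(x_λ)` almost decreasing for every weight `ω`, so both
converge. In particular the generated weight `φ` is the pointwise limit of `A(-, x_λ)`, and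
`φ ∘ ψ = lim_λ ψ(x_λ)` for every coweight `ψ`; since limits commute with `∧`, `φ` is flat.
If `s` is a supremum of `φ`, passing to the limit along an ultrafilter finer than the net in the
formula for `A(s, y)` shows `A(s, y) = lim_λ A(x_λ, y)`, so `s` is a Yoneda limit of the net.
-/

open Filter Set Topology

local notation "𝕀" => Set.Icc (0:ℝ) 1

variable {f : ℝ → ℝ → ℝ} {a b c r : ℝ}

theorem le_tres (hc : c ∈ 𝕀) (h : f a c ≤ b) : c ≤ tres f a b :=
  le_csSup ⟨1, fun _ hz => hz.1.2⟩ ⟨hc, h⟩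

namespace IsContTNorm

theorem mem (ht : IsContTNorm f) (ha : a ∈ 𝕀) (hb : b ∈ 𝕀) : f a b ∈ 𝕀 :=
  ht.1 a ha b hb

theorem comm (ht : IsContTNorm f) (ha : a ∈ 𝕀) (hb : b ∈ 𝕀) : f a b = f b a :=
  ht.2.2.1 a ha b hb

theorem assoc (ht : IsContTNorm f) (ha : a ∈ 𝕀) (hb : b ∈ 𝕀) (hc : c ∈ 𝕀) :
    f (f a b) c = f a (f b c) :=
  ht.2.2.2.1 a ha b hb c hc

theorem mono_left (ht : IsContTNorm f) (ha : a ∈ 𝕀) (hb : b ∈ 𝕀) (hc : c ∈ 𝕀) (h : a ≤ b) :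
    f a c ≤ f b c :=
  ht.2.2.2.2.1 a ha b hb c hc h

theorem apply_one (ht : IsContTNorm f) (ha : a ∈ 𝕀) : f a 1 = a :=
  ht.2.2.2.2.2 a ha

theorem mono_right_s12 (ht : IsContTNorm f) (ha : a ∈ 𝕀) (hb : b ∈ 𝕀) (hc : c ∈ 𝕀) (h : b ≤ c) :
    f a b ≤ f a c := by
  rw [ht.comm ha hb, ht.comm ha hc]
  exact ht.mono_left hb hc ha h

theorem apply_zero_s12 (ht : IsContTNorm f) (ha : a ∈ 𝕀) : f a 0 = 0 := by
  have h0 : (0:ℝ) ∈ 𝕀 := ⟨le_rfl, zero_le_one⟩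
  have h1 : (1:ℝ) ∈ 𝕀 := ⟨zero_le_one, le_rfl⟩
  refine le_antisymm ?_ (ht.mem ha h0).1
  calc f a 0 ≤ f 1 0 := ht.mono_left ha h1 h0 ha.2
    _ = 0 := by rw [ht.comm h1 h0, ht.apply_one h0]

theorem le_left (ht : IsContTNorm f) (ha : a ∈ 𝕀) (hb : b ∈ 𝕀) : f a b ≤ a := by
  simpa only [ht.apply_one ha] using ht.mono_right_s12 ha hb ⟨zero_le_one, le_rfl⟩ hb.2

theorem le_right (ht : IsContTNorm f) (ha : a ∈ 𝕀) (hb : b ∈ 𝕀) : f a b ≤ b := by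
  rw [ht.comm ha hb]
  exact ht.le_left hb ha

theorem continuousOn_apply (ht : IsContTNorm f) (ha : a ∈ 𝕀) : ContinuousOn (f a) 𝕀 :=
  ht.2.1.comp (continuous_const.prodMk continuous_id).continuousOn fun _ hz => ⟨ha, hz⟩

theorem tendsto (ht : IsContTNorm f) {ι : Type*} {l : Filter ι} [l.NeBot] {u v : ι → ℝ}
    (hu : ∀ i, u i ∈ 𝕀) (hv : ∀ i, v i ∈ 𝕀) (hua : Tendsto u l (𝓝 a)) (hvb : Tendsto v l (𝓝 b)) :
    Tendsto (fun i => f (u i) (v i)) l (𝓝 (f a b)) := by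
  have ha : a ∈ 𝕀 := isClosed_Icc.mem_of_tendsto hua (Eventually.of_forall hu)
  have hb : b ∈ 𝕀 := isClosed_Icc.mem_of_tendsto hvb (Eventually.of_forall hv)
  have hpair : Tendsto (fun i => (u i, v i)) l (𝓝[𝕀 ×ˢ 𝕀] (a, b)) :=
    tendsto_nhdsWithin_iff.2 ⟨hua.prodMk_nhds hvb, Eventually.of_forall fun i => ⟨hu i, hv i⟩⟩
  exact (ht.2.1 (a, b) ⟨ha, hb⟩).tendsto.comp hpair

theorem tres_mem_s12 (ht : IsContTNorm f) (ha : a ∈ 𝕀) (hb : 0 ≤ b) : tres f a b ∈ 𝕀 := by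
  have h0 : (0:ℝ) ∈ {z | z ∈ 𝕀 ∧ f a z ≤ b} := ⟨⟨le_rfl, zero_le_one⟩, by rwa [ht.apply_zero_s12 ha]⟩
  exact ⟨le_tres h0.1 h0.2, csSup_le ⟨0, h0⟩ fun _ hz => hz.1.2⟩

theorem apply_tres_le (ht : IsContTNorm f) (ha : a ∈ 𝕀) (hb : 0 ≤ b) : f a (tres f a b) ≤ b := by
  have hclosed : IsClosed {z | z ∈ 𝕀 ∧ f a z ≤ b} :=
    (ht.continuousOn_apply ha).preimage_isClosed_of_isClosed isClosed_Icc isClosed_Iic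
  have h0 : (0:ℝ) ∈ {z | z ∈ 𝕀 ∧ f a z ≤ b} := ⟨⟨le_rfl, zero_le_one⟩, by rwa [ht.apply_zero_s12 ha]⟩
  exact ((isCompact_Icc.of_isClosed_subset hclosed fun _ hz => hz.1).sSup_mem ⟨0, h0⟩).2

theorem apply_tres_s12 (ht : IsContTNorm f) (ha : a ∈ 𝕀) (hb : b ∈ 𝕀) :
    f a (tres f a b) = min a b := by
  rcases le_total b a with hba | hab
  · rw [min_eq_right hba]
    refine le_antisymm (ht.apply_tres_le ha hb.1) ?_
    obtain ⟨z, hz, hfz⟩ := intermediate_value_Icc zero_le_one (ht.continuousOn_apply ha)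
      (show b ∈ Icc (f a 0) (f a 1) by rw [ht.apply_zero_s12 ha, ht.apply_one ha]; exact ⟨hb.1, hba⟩)
    calc b = f a z := hfz.symm
      _ ≤ f a (tres f a b) := ht.mono_right_s12 ha hz (ht.tres_mem_s12 ha hb.1) (le_tres hz hfz.le)
  · have h1 : (1:ℝ) ∈ 𝕀 := ⟨zero_le_one, le_rfl⟩
    have htop : tres f a b = 1 :=
      le_antisymm (ht.tres_mem_s12 ha hb.1).2 (le_tres h1 (by rwa [ht.apply_one ha]))
    rw [htop, ht.apply_one ha, min_eq_left hab]

theorem apply_tres_of_le (ht : IsContTNorm f) (ha : a ∈ 𝕀) (hb : b ∈ 𝕀) (hba : b ≤ a) :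
    f a (tres f a b) = b := by
  rw [ht.apply_tres_s12 ha hb, min_eq_right hba]

theorem apply_apply_comm (ht : IsContTNorm f) (ha : a ∈ 𝕀) (hb : b ∈ 𝕀) (hr : r ∈ 𝕀) :
    f r (f a b) = f (f a r) b := by
  rw [← ht.assoc hr ha hb, ht.comm hr ha]

theorem tres_apply_swap (ht : IsContTNorm f) {p m : ℝ} (ha : a ∈ 𝕀) (hp : p ∈ 𝕀) (hm : m ∈ 𝕀)
    (hpa : p ≤ a) (hma : m ≤ a) :
    f (tres f a p) m = f p (tres f a m) := by
  have hrp := ht.tres_mem_s12 ha hp.1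
  conv_lhs => rw [← ht.apply_tres_of_le ha hm hma]
  rw [ht.apply_apply_comm ha (ht.tres_mem_s12 ha hm.1) hrp, ht.apply_tres_of_le ha hp hpa]

theorem apply_eq_self_of_le (ht : IsContTNorm f) (ha : a ∈ 𝕀) (hr : r ∈ 𝕀) (hc : c ∈ 𝕀)
    (h : f a r = a) (hca : c ≤ a) : f r c = c := by
  conv_lhs => rw [← ht.apply_tres_of_le ha hc hca]
  rw [ht.apply_apply_comm ha (ht.tres_mem_s12 ha hc.1) hr, h, ht.apply_tres_of_le ha hc hca]

theorem uniform_almost_unit (ht : IsContTNorm f) {ε : ℝ} (hε : 0 < ε) :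
    ∃ δ > 0, ∀ a ∈ 𝕀, ∀ r ∈ 𝕀, ∀ c ∈ 𝕀, c ≤ a → a - δ < f a r → c - ε < f r c := by
  obtain ⟨δ, hδ, hunif⟩ := Metric.uniformContinuousOn_iff.1
    ((isCompact_Icc.prod isCompact_Icc).uniformContinuousOn_of_continuous ht.2.1) ε hε
  refine ⟨δ, hδ, fun a ha r hr c hc hca har => ?_⟩
  have htr := ht.tres_mem_s12 ha hc.1
  have hdist : dist (f a r, tres f a c) (a, tres f a c) < δ := by
    rw [Prod.dist_eq, dist_self, Real.dist_eq, abs_sub_comm,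
      abs_of_nonneg (sub_nonneg.2 (ht.le_left ha hr))]
    exact max_lt (by linarith) hδ
  have hclose := hunif _ ⟨ht.mem ha hr, htr⟩ _ ⟨ha, htr⟩ hdist
  -- `c = a & (a → c)`, so `r & c = (a & r) & (a → c)` differs from `c` by a small change of `a`
  rw [Real.dist_eq, ht.apply_tres_of_le ha hc hca, abs_lt] at hclose
  rw [← ht.apply_tres_of_le ha hc hca, ht.apply_apply_comm ha htr hr, ht.apply_tres_of_le ha hc hca]
  linarith [hclose.1]

/-- The residual `→` is not continuous, so along an ultrafilter only a cluster value of the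
residuals is available; divisibility still pins it down. -/
theorem exists_tendsto_tres (ht : IsContTNorm f) {ι : Type*} (U : Ultrafilter ι) {u v : ι → ℝ}
    (hu : ∀ i, u i ∈ 𝕀) (hv : ∀ i, v i ∈ 𝕀) (hua : Tendsto u U (𝓝 a)) (hvb : Tendsto v U (𝓝 b)) :
    ∃ w ∈ 𝕀, Tendsto (fun i => tres f (u i) (v i)) U (𝓝 w) ∧ f a w = min a b := by
  have hres : ∀ i, tres f (u i) (v i) ∈ 𝕀 := fun i => ht.tres_mem_s12 (hu i) (hv i).1
  obtain ⟨w, hw, hlim⟩ := isCompact_Icc.ultrafilter_le_nhds (U.map fun i => tres f (u i) (v i))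
    (le_principal_iff.2 (Ultrafilter.mem_map.2 (univ_mem' hres)))
  refine ⟨w, hw, hlim, tendsto_nhds_unique ?_ (hua.min hvb)⟩
  simpa only [ht.apply_tres_s12 (hu _) (hv _)] using ht.tendsto hu hres hua hlim

end IsContTNorm

section Weights

variable {α : Type*} {A : α → α → ℝ} {t : ℝ} {ψ ω : α → ℝ}

theorem IsDCat.mem (hA : IsDCat f A) (u v : α) : A u v ∈ 𝕀 :=
  hA.1 u v

theorem IsDCat.le_diag_left (hA : IsDCat f A) (u v : α) : A u v ≤ A u u :=
  (hA.2.1 u v).trans (min_le_left _ _)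

theorem IsDCat.le_diag_right (hA : IsDCat f A) (u v : α) : A u v ≤ A v v :=
  (hA.2.1 u v).trans (min_le_right _ _)

theorem IsCoweight.le_diag (hψ : IsCoweight f A b ψ) (u : α) : ψ u ≤ A u u :=
  (hψ.1 u).2.trans (min_le_right _ _)

theorem IsCoweight.mem (hA : IsDCat f A) (hψ : IsCoweight f A b ψ) (u : α) : ψ u ∈ 𝕀 :=
  ⟨(hψ.1 u).1, (hψ.le_diag u).trans (hA.mem u u).2⟩

theorem IsWeight.le_diag (hω : IsWeight f A t ω) (u : α) : ω u ≤ A u u :=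
  (hω.1 u).2.trans (min_le_right _ _)

theorem IsWeight.mem (hA : IsDCat f A) (hω : IsWeight f A t ω) (u : α) : ω u ∈ 𝕀 :=
  ⟨(hω.1 u).1, (hω.le_diag u).trans (hA.mem u u).2⟩

theorem isCoweight_row (hA : IsDCat f A) (u : α) : IsCoweight f A 1 (A u) :=
  ⟨fun v => ⟨(hA.mem u v).1, le_min (hA.mem u v).2 (hA.le_diag_right u v)⟩,
    fun v w => hA.2.2 u v w⟩

theorem isWeight_col (hA : IsDCat f A) (y : α) : IsWeight f A 1 (fun v => A v y) :=
  ⟨fun v => ⟨(hA.mem v y).1, le_min (hA.mem v y).2 (hA.le_diag_left v y)⟩,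
    fun u v => hA.2.2 u v y⟩

theorem isCoweight_top (ht : IsContTNorm f) (hA : IsDCat f A) (hb : b ∈ 𝕀) :
    IsCoweight f A b (fun u => min b (A u u)) := by
  have hmem : ∀ u, min b (A u u) ∈ 𝕀 := fun u =>
    ⟨le_min hb.1 (hA.mem u u).1, (min_le_left _ _).trans hb.2⟩
  refine ⟨fun u => ⟨(hmem u).1, le_rfl⟩, fun u v => le_min ?_ ?_⟩
  · exact (ht.le_right (ht.tres_mem_s12 (hA.mem u u) (hA.mem u v).1) (hmem u)).trans (min_le_left _ _)
  · calc f (tres f (A u u) (A u v)) (min b (A u u))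
        ≤ f (tres f (A u u) (A u v)) (A u u) :=
          ht.mono_right_s12 (ht.tres_mem_s12 (hA.mem u u) (hA.mem u v).1) (hmem u) (hA.mem u u)
            (min_le_right _ _)
      _ ≤ A u v := hA.2.2 u u v
      _ ≤ A v v := hA.le_diag_right u v

theorem IsCoweight.inf (ht : IsContTNorm f) (hA : IsDCat f A) {ψ₁ ψ₂ : α → ℝ}
    (h₁ : IsCoweight f A b ψ₁) (h₂ : IsCoweight f A b ψ₂) :
    IsCoweight f A b (fun u => min (ψ₁ u) (ψ₂ u)) := by
  refine ⟨fun u => ⟨le_min (h₁.1 u).1 (h₂.1 u).1, (min_le_left _ _).trans (h₁.1 u).2⟩,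
    fun u v => ?_⟩
  have hr := ht.tres_mem_s12 (hA.mem u u) (hA.mem u v).1
  have hmin : min (ψ₁ u) (ψ₂ u) ∈ 𝕀 := ⟨le_min (h₁.mem hA u).1 (h₂.mem hA u).1,
    (min_le_left _ _).trans (h₁.mem hA u).2⟩
  exact le_min ((ht.mono_right_s12 hr hmin (h₁.mem hA u) (min_le_left _ _)).trans (h₁.2 u v))
    ((ht.mono_right_s12 hr hmin (h₂.mem hA u) (min_le_right _ _)).trans (h₂.2 u v))

theorem IsCoweight.tnorm_tres_le (ht : IsContTNorm f) (hA : IsDCat f A)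
    (hψ : IsCoweight f A b ψ) (u v : α) : f (A u v) (tres f (A u u) (ψ u)) ≤ ψ v := by
  rw [← ht.tres_apply_swap (hA.mem u u) (hA.mem u v) (hψ.mem hA u) (hA.le_diag_left u v)
    (hψ.le_diag u)]
  exact hψ.2 u v

end Weights

section Nets

variable {Λ : Type*} {g : Λ → ℝ}

/-- `genType`, `genWeight` and `genCoweight` are lower limits of this form. -/
noncomputable def tailLiminf [Preorder Λ] (g : Λ → ℝ) : ℝ :=
  ⨆ l : Λ, ⨅ σ : {σ : Λ // l ≤ σ}, g σ.1

theorem bddBelow_tail [Preorder Λ] (hg : BddBelow (range g)) (l : Λ) :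
    BddBelow (range fun σ : {σ : Λ // l ≤ σ} => g σ.1) :=
  hg.mono (range_subset_iff.2 fun σ => mem_range_self σ.1)

variable [SemilatticeSup Λ] [Nonempty Λ]

theorem tailLiminf_eq_of_tendsto {c : ℝ} (hg : BddBelow (range g))
    (h : Tendsto g atTop (𝓝 c)) : tailLiminf g = c := by
  have hclose : ∀ ε > 0, ∃ l₀ : Λ, (∀ l, ⨅ σ : {σ : Λ // l ≤ σ}, g σ.1 ≤ c + ε) ∧
      c - ε ≤ ⨅ σ : {σ : Λ // l₀ ≤ σ}, g σ.1 := by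
    intro ε hε
    obtain ⟨l₀, hl₀⟩ := Metric.tendsto_atTop.1 h ε hε
    refine ⟨l₀, fun l => ?_, ?_⟩
    · have := hl₀ (l ⊔ l₀) le_sup_right
      rw [Real.dist_eq, abs_lt] at this
      exact (ciInf_le (bddBelow_tail hg l) ⟨l ⊔ l₀, le_sup_left⟩).trans (by linarith)
    · have : Nonempty {σ : Λ // l₀ ≤ σ} := ⟨⟨l₀, le_rfl⟩⟩
      refine le_ciInf fun σ => ?_
      have := hl₀ σ σ.2
      rw [Real.dist_eq, abs_lt] at this
      linarith
  obtain ⟨-, hbdd, -⟩ := hclose 1 one_pos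
  refine eq_of_forall_dist_le fun ε hε => ?_
  obtain ⟨l₀, hup, hlow⟩ := hclose ε hε
  have hsup := le_ciSup ⟨c + 1, forall_mem_range.2 hbdd⟩ l₀
  rw [Real.dist_eq, abs_le]
  unfold tailLiminf
  constructor <;> linarith [ciSup_le hup]

theorem exists_tendsto_of_almost_monotone (hlo : BddBelow (range g)) (hhi : BddAbove (range g))
    (hg : ∀ ε > 0, ∃ l₀ : Λ, ∀ μ ν, l₀ ≤ μ → μ ≤ ν → g μ - ε ≤ g ν) :
    ∃ c, Tendsto g atTop (𝓝 c) := by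
  obtain ⟨M, hM⟩ := hhi
  have hbdd : BddAbove (range fun l : Λ => ⨅ σ : {σ : Λ // l ≤ σ}, g σ.1) :=
    ⟨M, forall_mem_range.2 fun l =>
      (ciInf_le (bddBelow_tail hlo l) ⟨l, le_rfl⟩).trans (hM (mem_range_self l))⟩
  refine ⟨tailLiminf g, Metric.tendsto_atTop.2 fun ε hε => ?_⟩
  obtain ⟨l₀, hl₀⟩ := hg (ε / 2) (half_pos hε)
  obtain ⟨l₁, hl₁⟩ := exists_lt_of_lt_ciSup (sub_lt_self (tailLiminf g) (half_pos hε))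
  refine ⟨l₀ ⊔ l₁, fun σ hσ => ?_⟩
  have hlow := hl₁.trans_le (ciInf_le (bddBelow_tail hlo l₁) ⟨σ, le_sup_right.trans hσ⟩)
  have : Nonempty {τ : Λ // σ ≤ τ} := ⟨⟨σ, le_rfl⟩⟩
  have hup : g σ - ε / 2 ≤ ⨅ τ : {τ : Λ // σ ≤ τ}, g τ.1 :=
    le_ciInf fun τ => hl₀ σ τ (le_sup_left.trans hσ) τ.2
  have hsup := le_ciSup hbdd σ
  rw [Real.dist_eq, abs_lt]
  unfold tailLiminf at *
  constructor <;> linarith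

theorem exists_tendsto_of_almost_antitone (hlo : BddBelow (range g)) (hhi : BddAbove (range g))
    (hg : ∀ ε > 0, ∃ l₀ : Λ, ∀ μ ν, l₀ ≤ μ → μ ≤ ν → g ν ≤ g μ + ε) :
    ∃ c, Tendsto g atTop (𝓝 c) := by
  obtain ⟨c, hc⟩ := exists_tendsto_of_almost_monotone hhi.range_neg hlo.range_neg fun ε hε => by
    obtain ⟨l₀, hl₀⟩ := hg ε hε
    exact ⟨l₀, fun μ ν hμ hμν => by linarith [hl₀ μ ν hμ hμν]⟩
  exact ⟨-c, by simpa using hc.neg⟩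

end Nets

section FwdCauchy

variable {α : Type*} {Λ : Type*} {A : α → α → ℝ} {x : Λ → α} {L : ℝ}

def FwdCauchyTo [Preorder Λ] (A : α → α → ℝ) (x : Λ → α) (L : ℝ) : Prop :=
  ∀ ε > 0, ∃ l₀ : Λ, ∀ μ ν, l₀ ≤ μ → μ ≤ ν → |A (x μ) (x ν) - L| < ε

variable [SemilatticeSup Λ] [Nonempty Λ]

theorem FwdCauchy.exists_fwdCauchyTo (h : FwdCauchy A x) : ∃ L, FwdCauchyTo A x L := by
  obtain ⟨L, hL⟩ := h
  refine ⟨L, fun ε hε => ?_⟩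
  obtain ⟨⟨l₁, l₂⟩, hl⟩ :=
    eventually_atTop.1 (eventually_inf_principal.1 (Metric.tendsto_nhds.1 hL ε hε))
  refine ⟨l₁ ⊔ l₂, fun μ ν hμ hμν => ?_⟩
  simpa [Real.dist_eq] using
    hl (μ, ν) ⟨le_sup_left.trans hμ, le_sup_right.trans (hμ.trans hμν)⟩ hμν

namespace FwdCauchyTo

theorem tendsto_diag (hx : FwdCauchyTo A x L) :
    Tendsto (fun l => A (x l) (x l)) atTop (𝓝 L) := by
  refine Metric.tendsto_atTop.2 fun ε hε => ?_
  obtain ⟨l₀, hl₀⟩ := hx ε hε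
  exact ⟨l₀, fun σ hσ => hl₀ σ σ hσ le_rfl⟩

theorem mem_Icc (hA : IsDCat f A) (hx : FwdCauchyTo A x L) : L ∈ 𝕀 :=
  isClosed_Icc.mem_of_tendsto hx.tendsto_diag (Eventually.of_forall fun _ => hA.mem _ _)

theorem genType_eq (hA : IsDCat f A) (hx : FwdCauchyTo A x L) : genType A x = L :=
  tailLiminf_eq_of_tendsto ⟨0, forall_mem_range.2 fun _ => (hA.mem _ _).1⟩ hx.tendsto_diag

theorem exists_tendsto_coweight (ht : IsContTNorm f) (hA : IsDCat f A) (hx : FwdCauchyTo A x L)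
    {ψ : α → ℝ} (hψ : IsCoweight f A b ψ) :
    ∃ c, Tendsto (fun l => ψ (x l)) atTop (𝓝 c) := by
  refine exists_tendsto_of_almost_monotone ⟨0, forall_mem_range.2 fun _ => (hψ.mem hA _).1⟩
    ⟨1, forall_mem_range.2 fun _ => (hψ.mem hA _).2⟩ fun ε hε => ?_
  obtain ⟨δ, hδ, hunit⟩ := ht.uniform_almost_unit hε
  obtain ⟨l₀, hl₀⟩ := hx (δ / 2) (half_pos hδ)
  refine ⟨l₀, fun μ ν hμ hμν => ?_⟩
  have hdiag := abs_lt.1 (hl₀ μ μ hμ le_rfl)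
  have hoff := abs_lt.1 (hl₀ μ ν hμ hμν)
  have halmost : A (x μ) (x μ) - δ <
      f (A (x μ) (x μ)) (tres f (A (x μ) (x μ)) (A (x μ) (x ν))) := by
    rw [ht.apply_tres_of_le (hA.mem _ _) (hA.mem _ _) (hA.le_diag_left _ _)]
    linarith
  exact (hunit _ (hA.mem _ _) _ (ht.tres_mem_s12 (hA.mem _ _) (hA.mem _ _).1) _ (hψ.mem hA _)
    (hψ.le_diag _) halmost).le.trans (hψ.2 _ _)

theorem exists_tendsto_weight (ht : IsContTNorm f) (hA : IsDCat f A) (hx : FwdCauchyTo A x L)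
    {t : ℝ} {ω : α → ℝ} (hω : IsWeight f A t ω) :
    ∃ c, Tendsto (fun l => ω (x l)) atTop (𝓝 c) := by
  refine exists_tendsto_of_almost_antitone ⟨0, forall_mem_range.2 fun _ => (hω.mem hA _).1⟩
    ⟨1, forall_mem_range.2 fun _ => (hω.mem hA _).2⟩ fun ε hε => ?_
  obtain ⟨δ, hδ, hunit⟩ := ht.uniform_almost_unit hε
  obtain ⟨l₀, hl₀⟩ := hx (δ / 2) (half_pos hδ)
  refine ⟨l₀, fun μ ν hμ hμν => ?_⟩
  have hdiag := abs_lt.1 (hl₀ ν ν (hμ.trans hμν) le_rfl)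
  have hoff := abs_lt.1 (hl₀ μ ν hμ hμν)
  have hr := ht.tres_mem_s12 (hA.mem (x ν) (x ν)) (hA.mem (x μ) (x ν)).1
  have halmost : A (x ν) (x ν) - δ <
      f (A (x ν) (x ν)) (tres f (A (x ν) (x ν)) (A (x μ) (x ν))) := by
    rw [ht.apply_tres_of_le (hA.mem _ _) (hA.mem _ _) (hA.le_diag_right _ _)]
    linarith
  have hlow := hunit _ (hA.mem _ _) _ hr _ (hω.mem hA _) (hω.le_diag _) halmost
  have hweight := hω.2 (x μ) (x ν)
  rw [ht.tres_apply_swap (hA.mem _ _) (hω.mem hA _) (hA.mem _ _) (hω.le_diag _)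
    (hA.le_diag_right _ _), ht.comm (hω.mem hA _) hr] at hweight
  linarith

theorem tendsto_genWeight (ht : IsContTNorm f) (hA : IsDCat f A) (hx : FwdCauchyTo A x L)
    (u : α) : Tendsto (fun σ => A u (x σ)) atTop (𝓝 (genWeight A x u)) := by
  obtain ⟨c, hc⟩ := hx.exists_tendsto_coweight ht hA (isCoweight_row hA u)
  rwa [show genWeight A x u = c from
    tailLiminf_eq_of_tendsto ⟨0, forall_mem_range.2 fun _ => (hA.mem _ _).1⟩ hc]

theorem tendsto_genCoweight (ht : IsContTNorm f) (hA : IsDCat f A) (hx : FwdCauchyTo A x L)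
    (y : α) : Tendsto (fun σ => A (x σ) y) atTop (𝓝 (genCoweight A x y)) := by
  obtain ⟨c, hc⟩ := hx.exists_tendsto_weight ht hA (isWeight_col hA y)
  rwa [show genCoweight A x y = c from
    tailLiminf_eq_of_tendsto ⟨0, forall_mem_range.2 fun _ => (hA.mem _ _).1⟩ hc]

theorem genWeight_mem (ht : IsContTNorm f) (hA : IsDCat f A) (hx : FwdCauchyTo A x L) (u : α) :
    genWeight A x u ∈ 𝕀 :=
  isClosed_Icc.mem_of_tendsto (hx.tendsto_genWeight ht hA u)
    (Eventually.of_forall fun _ => hA.mem _ _)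

theorem genWeight_le_diag (ht : IsContTNorm f) (hA : IsDCat f A) (hx : FwdCauchyTo A x L)
    (u : α) : genWeight A x u ≤ A u u :=
  le_of_tendsto' (hx.tendsto_genWeight ht hA u) fun _ => hA.le_diag_left _ _

theorem genWeight_le (ht : IsContTNorm f) (hA : IsDCat f A) (hx : FwdCauchyTo A x L) (u : α) :
    genWeight A x u ≤ L :=
  le_of_tendsto_of_tendsto' (hx.tendsto_genWeight ht hA u) hx.tendsto_diag
    fun _ => hA.le_diag_right _ _

theorem genCoweight_le_diag (ht : IsContTNorm f) (hA : IsDCat f A) (hx : FwdCauchyTo A x L)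
    (y : α) : genCoweight A x y ≤ A y y :=
  le_of_tendsto' (hx.tendsto_genCoweight ht hA y) fun _ => hA.le_diag_right _ _

theorem genCoweight_le (ht : IsContTNorm f) (hA : IsDCat f A) (hx : FwdCauchyTo A x L)
    (y : α) : genCoweight A x y ≤ L :=
  le_of_tendsto_of_tendsto' (hx.tendsto_genCoweight ht hA y) hx.tendsto_diag
    fun _ => hA.le_diag_left _ _

theorem tendsto_genWeight_diag (ht : IsContTNorm f) (hA : IsDCat f A) (hx : FwdCauchyTo A x L) :
    Tendsto (fun l => genWeight A x (x l)) atTop (𝓝 L) := by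
  refine Metric.tendsto_atTop.2 fun ε hε => ?_
  obtain ⟨l₀, hl₀⟩ := hx (ε / 2) (half_pos hε)
  refine ⟨l₀, fun σ hσ => ?_⟩
  have hlow : L - ε / 2 ≤ genWeight A x (x σ) :=
    ge_of_tendsto (hx.tendsto_genWeight ht hA (x σ)) <|
      (eventually_ge_atTop σ).mono fun τ hτ => by linarith [(abs_lt.1 (hl₀ σ τ hσ hτ)).1]
  rw [Real.dist_eq, abs_lt]
  constructor <;> linarith [hx.genWeight_le ht hA (x σ)]

theorem tnorm_genWeight_le (ht : IsContTNorm f) (hA : IsDCat f A) (hx : FwdCauchyTo A x L)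
    {u : α} {g : Λ → ℝ} (hr : r ∈ 𝕀) (hg : Tendsto g atTop (𝓝 c))
    (h : ∀ σ, f (A u (x σ)) r ≤ g σ) : f (genWeight A x u) r ≤ c :=
  le_of_tendsto_of_tendsto'
    (ht.tendsto (fun _ => hA.mem _ _) (fun _ => hr) (hx.tendsto_genWeight ht hA u)
      tendsto_const_nhds) hg h

theorem isWeight_genWeight (ht : IsContTNorm f) (hA : IsDCat f A) (hx : FwdCauchyTo A x L) :
    IsWeight f A L (genWeight A x) := by
  refine ⟨fun u => ⟨(hx.genWeight_mem ht hA u).1,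
    le_min (hx.genWeight_le ht hA u) (hx.genWeight_le_diag ht hA u)⟩, fun u v => ?_⟩
  rw [ht.tres_apply_swap (hA.mem v v) (hx.genWeight_mem ht hA v) (hA.mem u v)
    (hx.genWeight_le_diag ht hA v) (hA.le_diag_right u v)]
  exact hx.tnorm_genWeight_le ht hA (ht.tres_mem_s12 (hA.mem v v) (hA.mem u v).1)
    (hx.tendsto_genWeight ht hA u) fun σ => (isCoweight_row hA u).tnorm_tres_le ht hA v (x σ)

theorem compWC_genWeight (ht : IsContTNorm f) (hA : IsDCat f A) (hx : FwdCauchyTo A x L)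
    {ψ : α → ℝ} (hψ : IsCoweight f A b ψ)
    (hc : Tendsto (fun l => ψ (x l)) atTop (𝓝 c)) :
    compWC f A (genWeight A x) ψ = c := by
  have : Nonempty α := ⟨x (Classical.arbitrary Λ)⟩
  have hφ := hx.genWeight_mem ht hA
  have hres : ∀ u, tres f (A u u) (genWeight A x u) ∈ 𝕀 := fun u =>
    ht.tres_mem_s12 (hA.mem u u) (hφ u).1
  have hbdd : BddAbove (range fun u => f (tres f (A u u) (genWeight A x u)) (ψ u)) :=
    ⟨1, forall_mem_range.2 fun u => (ht.mem (hres u) (hψ.mem hA u)).2⟩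
  have hcL : c ≤ L := le_of_tendsto_of_tendsto' hc hx.tendsto_diag fun _ => hψ.le_diag _
  have hcI : c ∈ 𝕀 := isClosed_Icc.mem_of_tendsto hc (Eventually.of_forall fun _ => hψ.mem hA _)
  refine le_antisymm (ciSup_le fun u => ?_) ?_
  · rw [ht.tres_apply_swap (hA.mem u u) (hφ u) (hψ.mem hA u) (hx.genWeight_le_diag ht hA u)
      (hψ.le_diag u)]
    exact hx.tnorm_genWeight_le ht hA (ht.tres_mem_s12 (hA.mem u u) (hψ.mem hA u).1) hc
      fun σ => hψ.tnorm_tres_le ht hA u (x σ)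
  · -- along the net `A(x_λ, x_λ) → φ(x_λ)` tends to a unit for everything below `L`
    let U := Ultrafilter.of (atTop : Filter Λ)
    have hU : (U : Filter Λ) ≤ atTop := Ultrafilter.of_le atTop
    obtain ⟨w, hw, hwU, hLw⟩ := ht.exists_tendsto_tres U (fun _ => hA.mem _ _) (fun _ => hφ _)
      (hx.tendsto_diag.mono_left hU) ((hx.tendsto_genWeight_diag ht hA).mono_left hU)
    rw [min_self] at hLw
    have hterm := ht.tendsto (fun _ => hres _) (fun _ => hψ.mem hA _) hwU (hc.mono_left hU)
    rw [ht.apply_eq_self_of_le (hx.mem_Icc hA) hw hcI hLw hcL] at hterm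
    exact le_of_tendsto hterm (Eventually.of_forall fun l => le_ciSup hbdd (x l))

theorem isFlat_genWeight (ht : IsContTNorm f) (hA : IsDCat f A) (hx : FwdCauchyTo A x L) :
    IsFlat f A L (genWeight A x) := by
  refine fun b hb => ⟨hx.compWC_genWeight ht hA (isCoweight_top ht hA hb)
    (tendsto_const_nhds.min hx.tendsto_diag), fun ψ₁ ψ₂ h₁ h₂ => ?_⟩
  obtain ⟨c₁, hc₁⟩ := hx.exists_tendsto_coweight ht hA h₁
  obtain ⟨c₂, hc₂⟩ := hx.exists_tendsto_coweight ht hA h₂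
  rw [hx.compWC_genWeight ht hA h₁ hc₁, hx.compWC_genWeight ht hA h₂ hc₂]
  exact hx.compWC_genWeight ht hA (h₁.inf ht hA h₂) (hc₁.min hc₂)

theorem genCoweight_le_tnorm_tres (ht : IsContTNorm f) (hA : IsDCat f A)
    (hx : FwdCauchyTo A x L) (u y : α) :
    genCoweight A x y ≤ f (tres f (genWeight A x u) (A u y)) L := by
  let U := Ultrafilter.of (atTop : Filter Λ)
  have hU : (U : Filter Λ) ≤ atTop := Ultrafilter.of_le atTop
  have hL := hx.mem_Icc hA
  obtain ⟨w, hw, hwU, hLw⟩ := ht.exists_tendsto_tres U (fun _ => hA.mem _ _)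
    (fun _ => hA.mem _ y) (hx.tendsto_diag.mono_left hU)
    ((hx.tendsto_genCoweight ht hA y).mono_left hU)
  rw [min_eq_right (hx.genCoweight_le ht hA y)] at hLw
  have hwφ : f w (genWeight A x u) ≤ A u y :=
    le_of_tendsto (ht.tendsto (fun _ => ht.tres_mem_s12 (hA.mem _ _) (hA.mem _ _).1)
      (fun _ => hA.mem _ _) hwU ((hx.tendsto_genWeight ht hA u).mono_left hU))
      (Eventually.of_forall fun l => hA.2.2 u (x l) y)
  have hres := ht.tres_mem_s12 (hx.genWeight_mem ht hA u) (hA.mem u y).1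
  calc genCoweight A x y = f w L := by rw [← hLw, ht.comm hL hw]
    _ ≤ f (tres f (genWeight A x u) (A u y)) L :=
      ht.mono_left hw hres hL
        (le_tres hw (by rwa [ht.comm (hx.genWeight_mem ht hA u) hw]))

theorem iInf_tnorm_tres_le_genCoweight (ht : IsContTNorm f) (hA : IsDCat f A)
    (hx : FwdCauchyTo A x L) (y : α) :
    ⨅ u, f (tres f (genWeight A x u) (A u y)) L ≤ genCoweight A x y := by
  let U := Ultrafilter.of (atTop : Filter Λ)
  have hU : (U : Filter Λ) ≤ atTop := Ultrafilter.of_le atTop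
  have hL := hx.mem_Icc hA
  have hφ := hx.genWeight_mem ht hA
  obtain ⟨q, hq, hqU, hLq⟩ := ht.exists_tendsto_tres U (fun _ => hφ _) (fun _ => hA.mem _ y)
    ((hx.tendsto_genWeight_diag ht hA).mono_left hU)
    ((hx.tendsto_genCoweight ht hA y).mono_left hU)
  rw [min_eq_right (hx.genCoweight_le ht hA y)] at hLq
  have hterm := ht.tendsto (fun _ => ht.tres_mem_s12 (hφ _) (hA.mem _ _).1) (fun _ => hL) hqU
    tendsto_const_nhds
  rw [ht.comm hq hL, hLq] at hterm
  exact ge_of_tendsto hterm <| Eventually.of_forall fun l =>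
    ciInf_le ⟨0, forall_mem_range.2 fun u => (ht.mem (ht.tres_mem_s12 (hφ u) (hA.mem u y).1) hL).1⟩
      (x l)

theorem yonedaLim_of_isSupremum (ht : IsContTNorm f) (hA : IsDCat f A) (hx : FwdCauchyTo A x L)
    {s : α} (hs : IsSupremum f A L (genWeight A x) s) : YonedaLim A x s := by
  have : Nonempty α := ⟨x (Classical.arbitrary Λ)⟩
  refine ⟨hs.1.trans (hx.genType_eq hA).symm, fun y => (hs.2 y).trans (le_antisymm ?_ ?_)⟩
  · exact (min_le_right _ _).trans (hx.iInf_tnorm_tres_le_genCoweight ht hA y)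
  · exact le_min (hx.genCoweight_le_diag ht hA y)
      (le_ciInf fun u => hx.genCoweight_le_tnorm_tres ht hA u y)

end FwdCauchyTo

end FwdCauchy

/-- every weight generated by a forward Cauchy net is flat; consequently
every flat complete D(Q)-category is Yoneda complete. -/
theorem stmt12 (f : ℝ → ℝ → ℝ) (ht : IsContTNorm f)
    {α : Type} (A : α → α → ℝ) (hA : IsDCat f A) :
    (∀ (Λ : Type) [SemilatticeSup Λ] [Nonempty Λ] (x : Λ → α), FwdCauchy A x →
      IsFlat f A (genType A x) (genWeight A x)) ∧
    ((∀ (tφ : ℝ) (φ : α → ℝ), tφ ∈ Set.Icc (0:ℝ) 1 → IsWeight f A tφ φ →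
        IsFlat f A tφ φ → ∃ s, IsSupremum f A tφ φ s) →
      ∀ (Λ : Type) [SemilatticeSup Λ] [Nonempty Λ] (x : Λ → α), FwdCauchy A x →
        ∃ s, YonedaLim A x s) := by
  refine ⟨fun Λ _ _ x hx => ?_, fun hcomplete Λ _ _ x hx => ?_⟩
  · obtain ⟨L, hL⟩ := hx.exists_fwdCauchyTo
    rw [hL.genType_eq hA]
    exact hL.isFlat_genWeight ht hA
  · obtain ⟨L, hL⟩ := hx.exists_fwdCauchyTo
    obtain ⟨s, hs⟩ := hcomplete L (genWeight A x) (hL.mem_Icc hA) (hL.isWeight_genWeight ht hA)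
      (hL.isFlat_genWeight ht hA)
    exact ⟨s, hL.yonedaLim_of_isSupremum ht hA hs⟩
end
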